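/- arXiv:2605.17485 — 4 statements merged into one kernel-verified Lean document; each statement's English description precedes it below -/
import Mathlib

section
/- There exists a constant K ≥ 1, depending only on α and β, such that for every δ ∈ (0, 1/2) there is a bijection Φ_δ from the truncated wedge Ω_δ onto the full wedge Ω_0 satisfying (1/K)|x − x'| ≤ |Φ_δ(x) − Φ_δ(x')| ≤ K|x − x'| for all x, x' ∈ Ω_δ. In other words, Ω_δ and Ω_0 are bi-Lipschitz equivalent with a bi-Lipschitz constant that is uniformly bounded for δ ∈ (0, 1/2). -/
open MeasureTheory Set
open scoped ENNReal RealInnerProductSpace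

noncomputable section

abbrev E2 := EuclideanSpace ℝ (Fin 2)
abbrev M2 := Matrix (Fin 2) (Fin 2) ℝ

def er (θ : ℝ) : E2 :=
  Real.cos θ • EuclideanSpace.single (0 : Fin 2) (1 : ℝ) +
    Real.sin θ • EuclideanSpace.single (1 : Fin 2) (1 : ℝ)

def etheta (θ : ℝ) : E2 :=
  (-Real.sin θ) • EuclideanSpace.single (0 : Fin 2) (1 : ℝ) +
    Real.cos θ • EuclideanSpace.single (1 : Fin 2) (1 : ℝ)

def wedge (α β δ : ℝ) : Set E2 :=
  {x | ∃ r θ : ℝ, r ∈ Set.Ioo δ 1 ∧ θ ∈ Set.Ioo α β ∧ x = r • er θ}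

def wedgeAnn (α β s t : ℝ) : Set E2 :=
  {x | ∃ r θ : ℝ, r ∈ Set.Ioo s t ∧ θ ∈ Set.Ioo α β ∧ x = r • er θ}

def frob (A : M2) : ℝ := Real.sqrt (∑ i, ∑ j, A i j ^ 2)

def SO2 : Set M2 := {R | R.transpose * R = 1 ∧ R.det = 1}

def distSO2 (F : M2) : ℝ := sInf ((fun R => frob (F - R)) '' SO2)

def mclm (A : M2) : E2 →L[ℝ] E2 :=
  LinearMap.toContinuousLinearMap (Matrix.toEuclideanLin A)

def lpM (p : ℝ) (U : Set E2) (G : E2 → M2) : ℝ≥0∞ :=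
  (∫⁻ x in U, ENNReal.ofReal (frob (G x) ^ p)) ^ (1 / p)

def lpS (p : ℝ) (U : Set E2) (g : E2 → ℝ) : ℝ≥0∞ :=
  (∫⁻ x in U, ENNReal.ofReal (|g x| ^ p)) ^ (1 / p)

def gag (p α β : ℝ) (v : ℝ → E2) : ℝ≥0∞ :=
  (∫⁻ θ in Set.Ioo α β, ∫⁻ θ' in Set.Ioo α β,
      ENNReal.ofReal ((‖v θ - v θ'‖ / |θ - θ'|) ^ p)) ^ (1 / p)

def sym2 (A : M2) : M2 := (1 / 2 : ℝ) • (A + A.transpose)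

def skw2 (A : M2) : M2 := (1 / 2 : ℝ) • (A - A.transpose)

def Rset (U : Set E2) (G : E2 → M2) : Set M2 :=
  {R | R ∈ SO2 ∧ ∀ Q ∈ SO2,
      (∫⁻ x in U, ENNReal.ofReal (frob (G x - R) ^ 2)) ≤
        ∫⁻ x in U, ENNReal.ofReal (frob (G x - Q) ^ 2)}

def perp (v : Fin 2 → ℝ) : Fin 2 → ℝ := ![-(v 1), v 0]

set_option autoImplicit false
open scoped Real

lemma er_apply0 (a b θ θ' : ℝ) : (a • er θ - b • er θ') 0 = a * Real.cos θ - b * Real.cos θ' := by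
  simp [er, EuclideanSpace.single_apply]

lemma er_apply1 (a b θ θ' : ℝ) : (a • er θ - b • er θ') 1 = a * Real.sin θ - b * Real.sin θ' := by
  simp [er, EuclideanSpace.single_apply]

lemma normsq_polar (a b θ θ' : ℝ) :
    ‖a • er θ - b • er θ'‖ ^ 2 = (a - b) ^ 2 + 2 * a * b * (1 - Real.cos (θ - θ')) := by
  have h1 : ‖a • er θ - b • er θ'‖ = Real.sqrt (∑ i : Fin 2, ‖(a • er θ - b • er θ') i‖ ^ 2) :=
    EuclideanSpace.norm_eq _
  rw [h1, Real.sq_sqrt (by positivity)]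
  rw [Fin.sum_univ_two, er_apply0, er_apply1, Real.norm_eq_abs, Real.norm_eq_abs, sq_abs, sq_abs]
  rw [Real.cos_sub]
  linear_combination (a^2) * Real.sin_sq_add_cos_sq θ + (b^2) * Real.sin_sq_add_cos_sq θ'


-- helper: |x| ≤ y from x² ≤ y²
lemma abs_le_of_sq_le (x y : ℝ) (hy : 0 ≤ y) (h : x ^ 2 ≤ y ^ 2) : |x| ≤ y := by
  rw [abs_le]; constructor <;> nlinarith

-- sin concavity lower bound
lemma sin_lower {T s : ℝ} (hT0 : 0 < T) (hTπ : T ≤ π) (hs0 : 0 ≤ s) (hsT : s ≤ T) :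
    Real.sin T / T * s ≤ Real.sin s := by
  have h := strictConcaveOn_sin_Icc.concaveOn.2 (Set.mem_Icc.2 ⟨le_rfl, Real.pi_pos.le⟩)
    (Set.mem_Icc.2 ⟨hT0.le, hTπ⟩)
    (show (0:ℝ) ≤ 1 - s / T by rw [sub_nonneg]; exact div_le_one_of_le₀ hsT hT0.le)
    (show (0:ℝ) ≤ s / T by positivity)
    (show (1 - s / T) + s / T = 1 by ring)
  simp only [smul_eq_mul, mul_zero, Real.sin_zero, zero_add] at h
  have hsT' : s / T * T = s := div_mul_cancel₀ _ hT0.ne'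
  rw [hsT'] at h
  calc Real.sin T / T * s = s / T * Real.sin T := by ring
  _ ≤ _ := h

-- 1 - cos bounds
lemma one_sub_cos_le (x : ℝ) : 1 - Real.cos x ≤ x ^ 2 / 2 := by
  have := Real.one_sub_sq_div_two_le_cos (x := x); linarith

lemma one_sub_cos_ge {h x : ℝ} (hh0 : 0 < h) (hhπ : h < π) (hx : |x| ≤ 2 * h) :
    (Real.sin h / h) ^ 2 / 2 * x ^ 2 ≤ 1 - Real.cos x := by
  have habs : 1 - Real.cos x = 2 * Real.sin (|x| / 2) ^ 2 := by
    rcases abs_cases x with ⟨he, _⟩ | ⟨he, _⟩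
    · rw [he, Real.sin_sq_eq_half_sub]; ring_nf
    · rw [he]
      rw [show -x / 2 = -(x/2) by ring, Real.sin_neg]
      rw [neg_sq, Real.sin_sq_eq_half_sub]; ring_nf
  have h1 : Real.sin h / h * (|x| / 2) ≤ Real.sin (|x| / 2) :=
    sin_lower hh0 hhπ.le (by positivity) (by linarith [abs_nonneg x])
  have h2 : 0 ≤ Real.sin h / h * (|x| / 2) := by
    have : 0 ≤ Real.sin h := Real.sin_nonneg_of_nonneg_of_le_pi hh0.le hhπ.le
    positivity
  have h3 : (Real.sin h / h * (|x| / 2)) ^ 2 ≤ Real.sin (|x| / 2) ^ 2 := by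
    apply pow_le_pow_left₀ h2 h1
  rw [habs]
  calc (Real.sin h / h) ^ 2 / 2 * x ^ 2 = 2 * (Real.sin h / h * (|x| / 2)) ^ 2 := by
        rw [mul_pow, div_pow, div_pow, sq_abs]; ring
  _ ≤ 2 * Real.sin (|x| / 2) ^ 2 := by linarith

lemma minP (a b φ φ' : ℝ) (ha : 0 ≤ a) (hb : 0 ≤ b) (hφ : |φ| ≤ Real.pi)
    (hφ' : |φ'| ≤ Real.pi) :
    |a * φ - b * φ'| ≤ min a b * |φ - φ'| + Real.pi * |a - b| := by
  rcases le_total a b with h | h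
  · rw [min_eq_left h]
    calc |a * φ - b * φ'| = |a * (φ - φ') + (a - b) * φ'| := by ring_nf
    _ ≤ |a * (φ - φ')| + |(a - b) * φ'| := abs_add_le _ _
    _ = a * |φ - φ'| + |a - b| * |φ'| := by rw [abs_mul, abs_mul, abs_of_nonneg ha]
    _ ≤ a * |φ - φ'| + Real.pi * |a - b| := by
        have := mul_le_mul_of_nonneg_left hφ' (abs_nonneg (a - b)); nlinarith
  · rw [min_eq_right h]
    calc |a * φ - b * φ'| = |b * (φ - φ') + (a - b) * φ| := by ring_nf
    _ ≤ |b * (φ - φ')| + |(a - b) * φ| := abs_add_le _ _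
    _ = b * |φ - φ'| + |a - b| * |φ| := by rw [abs_mul, abs_mul, abs_of_nonneg hb]
    _ ≤ b * |φ - φ'| + Real.pi * |a - b| := by
        have := mul_le_mul_of_nonneg_left hφ (abs_nonneg (a - b)); nlinarith

lemma N1 (m a b φ φ' : ℝ) (ha : 0 ≤ a) (hb : 0 ≤ b) (hφ : |φ| ≤ Real.pi)
    (hφ' : |φ'| ≤ Real.pi) :
    ‖a • er (m + φ) - b • er (m + φ')‖ ≤ 5 * (|a - b| + |a * φ - b * φ'|) := by
  have hL : 0 ≤ 5 * (|a - b| + |a * φ - b * φ'|) := by positivity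
  rw [← abs_of_nonneg (norm_nonneg (a • er (m + φ) - b • er (m + φ')))]
  apply abs_le_of_sq_le _ _ hL
  rw [normsq_polar]
  have hΔ : m + φ - (m + φ') = φ - φ' := by ring
  rw [hΔ]
  set D := |a - b| with hD
  set Ev := |a * φ - b * φ'| with hE
  have hF1 : a * |φ - φ'| ≤ Ev + Real.pi * D := by
    have : a * |φ - φ'| = |a * φ - b * φ' + (b - a) * φ'| := by
      rw [show a * φ - b * φ' + (b - a) * φ' = a * (φ - φ') by ring, abs_mul, abs_of_nonneg ha]
    rw [this]
    calc |a * φ - b * φ' + (b - a) * φ'| ≤ Ev + |(b - a) * φ'| := abs_add_le _ _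
    _ ≤ Ev + Real.pi * D := by
        rw [abs_mul, abs_sub_comm b a]
        have := mul_le_mul_of_nonneg_left hφ' (abs_nonneg (a - b)); nlinarith
  have hF2 : b * |φ - φ'| ≤ Ev + Real.pi * D := by
    have : b * |φ - φ'| = |a * φ - b * φ' + b * φ - a * φ| := by
      rw [show a * φ - b * φ' + b * φ - a * φ = b * (φ - φ') by ring, abs_mul, abs_of_nonneg hb]
    rw [this]
    calc |a * φ - b * φ' + b * φ - a * φ| = |a * φ - b * φ' + (b - a) * φ| := by ring_nf
    _ ≤ Ev + |(b - a) * φ| := abs_add_le _ _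
    _ ≤ Ev + Real.pi * D := by
        rw [abs_mul, abs_sub_comm b a]
        have := mul_le_mul_of_nonneg_left hφ (abs_nonneg (a - b)); nlinarith
  have hab : a * b * (φ - φ') ^ 2 ≤ (Ev + Real.pi * D) ^ 2 := by
    have h0 : 0 ≤ a * |φ - φ'| := by positivity
    have h1 : (a * |φ - φ'|) * (b * |φ - φ'|) ≤ (Ev + Real.pi * D) ^ 2 := by
      have h2 : 0 ≤ Ev + Real.pi * D := le_trans h0 hF1
      nlinarith [mul_le_mul hF1 hF2 (by positivity) h2]
    calc a * b * (φ - φ') ^ 2 = (a * |φ - φ'|) * (b * |φ - φ'|) := by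
          rw [show (a * |φ - φ'|) * (b * |φ - φ'|) = a * b * |φ - φ'| ^ 2 by ring, sq_abs]
    _ ≤ _ := h1
  have hcos := one_sub_cos_le (φ - φ')
  have hcos0 : 0 ≤ 1 - Real.cos (φ - φ') := by
    have := Real.cos_le_one (φ - φ'); linarith
  have hπ4 : Real.pi ≤ 4 := by linarith [Real.pi_le_four]
  have hD0 : 0 ≤ D := abs_nonneg _
  have hE0 : 0 ≤ Ev := abs_nonneg _
  have hπ0 : 0 < Real.pi := Real.pi_pos
  have hstep : (a - b) ^ 2 + 2 * a * b * (1 - Real.cos (φ - φ')) ≤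
      D ^ 2 + (Ev + Real.pi * D) ^ 2 := by
    have := mul_le_mul_of_nonneg_left hcos (mul_nonneg ha hb)
    have hsa := sq_abs (a - b)
    nlinarith
  have h44 : (Ev + Real.pi * D) ^ 2 ≤ (Ev + 4 * D) ^ 2 := by
    nlinarith [mul_nonneg (mul_nonneg (sub_nonneg.2 hπ4) hD0) hE0,
      mul_nonneg (sub_nonneg.2 hπ4) (sq_nonneg D), sq_nonneg D]
  nlinarith [mul_nonneg hD0 hE0]

set_option maxHeartbeats 1000000 in
lemma N2 (m h a b φ φ' : ℝ) (hh0 : 0 < h) (hhπ : h < Real.pi) (ha : 0 < a) (hb : 0 < b)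
    (hφ : |φ| ≤ h) (hφ' : |φ'| ≤ h) :
    |a - b| + |a * φ - b * φ'| ≤
      (5 + h / Real.sin h) * ‖a • er (m + φ) - b • er (m + φ')‖ := by
  set L := ‖a • er (m + φ) - b • er (m + φ')‖ with hLdef
  have hL0 : 0 ≤ L := norm_nonneg _
  have hLsq : L ^ 2 = (a - b) ^ 2 + 2 * a * b * (1 - Real.cos (φ - φ')) := by
    rw [hLdef, normsq_polar, show m + φ - (m + φ') = φ - φ' by ring]
  have hsinh : 0 < Real.sin h := Real.sin_pos_of_pos_of_lt_pi hh0 hhπ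
  have hcos0 : 0 ≤ 1 - Real.cos (φ - φ') := by
    have := Real.cos_le_one (φ - φ'); linarith
  -- f1
  have f1 : |a - b| ≤ L := by
    apply abs_le_of_sq_le _ _ hL0
    nlinarith [mul_nonneg (mul_nonneg ha.le hb.le) hcos0]
  -- f2
  have hΔ2h : |φ - φ'| ≤ 2 * h := by
    calc |φ - φ'| ≤ |φ| + |φ'| := abs_sub _ _
    _ ≤ 2 * h := by linarith
  have hlow := one_sub_cos_ge hh0 hhπ hΔ2h
  have f2' : min a b * |φ - φ'| * (Real.sin h / h) ≤ L := by
    have hx : 0 ≤ min a b * |φ - φ'| * (Real.sin h / h) := by positivity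
    rw [← abs_of_nonneg hx]
    apply abs_le_of_sq_le _ _ hL0
    have hmin : (min a b) ^ 2 ≤ a * b := by
      rcases le_total a b with hle | hle
      · rw [min_eq_left hle]; nlinarith
      · rw [min_eq_right hle]; nlinarith
    have h1 : 2 * (min a b) ^ 2 * ((Real.sin h / h) ^ 2 / 2 * (φ - φ') ^ 2) ≤
        2 * a * b * (1 - Real.cos (φ - φ')) := by
      have := mul_le_mul hmin hlow (by positivity) (mul_nonneg ha.le hb.le)
      nlinarith
    calc (min a b * |φ - φ'| * (Real.sin h / h)) ^ 2
        = 2 * (min a b) ^ 2 * ((Real.sin h / h) ^ 2 / 2 * (φ - φ') ^ 2) := by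
          rw [show (min a b * |φ - φ'| * (Real.sin h / h)) ^ 2 =
            (min a b) ^2 * (Real.sin h / h) ^ 2 * |φ - φ'| ^ 2 by ring, sq_abs]
          ring
    _ ≤ 2 * a * b * (1 - Real.cos (φ - φ')) := h1
    _ ≤ L ^ 2 := by nlinarith [sq_nonneg (a - b)]
  have f2 : min a b * |φ - φ'| ≤ L * (h / Real.sin h) := by
    have := mul_le_mul_of_nonneg_right f2' (le_of_lt (div_pos hh0 hsinh))
    calc min a b * |φ - φ'|
        = min a b * |φ - φ'| * (Real.sin h / h) * (h / Real.sin h) := by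
          field_simp
    _ ≤ L * (h / Real.sin h) := this
  -- f3
  have hφπ : |φ| ≤ Real.pi := le_trans hφ hhπ.le
  have hφ'π : |φ'| ≤ Real.pi := le_trans hφ' hhπ.le
  have f3 := minP a b φ φ' ha.le hb.le hφπ hφ'π
  have hπ4 : Real.pi ≤ 4 := by linarith [Real.pi_le_four]
  have hhs : 0 ≤ h / Real.sin h := by positivity
  have g1 : (1 + Real.pi) * |a - b| ≤ (1 + Real.pi) * L :=
    mul_le_mul_of_nonneg_left f1 (by positivity)
  have g2 : (1 + Real.pi) * L ≤ 5 * L := by nlinarith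
  nlinarith [f3, g1, g2, f2]

lemma polar_unique (a b θ θ' : ℝ) (ha : 0 < a) (hb : 0 < b) (hΔ : |θ - θ'| < 2 * π)
    (heq : a • er θ = b • er θ') : a = b ∧ θ = θ' := by
  have h0 : ‖a • er θ - b • er θ'‖ ^ 2 = 0 := by rw [sub_eq_zero.2 heq]; simp
  rw [normsq_polar] at h0
  have hcos0 : 0 ≤ 1 - Real.cos (θ - θ') := by have := Real.cos_le_one (θ - θ'); linarith
  have hab : a = b := by nlinarith [sq_nonneg (a - b), mul_nonneg (mul_nonneg ha.le hb.le) hcos0]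
  have hsq : (a - b) ^ 2 = 0 := by rw [hab]; ring
  have h0' : a * b * (1 - Real.cos (θ - θ')) = 0 := by linear_combination (h0 - hsq) / 2
  have hcos1 : Real.cos (θ - θ') = 1 := by
    rcases mul_eq_zero.1 h0' with h | h
    · nlinarith [mul_pos ha hb]
    · linarith
  have hθ := (Real.cos_eq_one_iff_of_lt_of_lt (by
    rcases abs_lt.1 hΔ with ⟨h1, _⟩; linarith) (by
    rcases abs_lt.1 hΔ with ⟨_, h2⟩; linarith)).1 hcos1
  exact ⟨hab, by linarith⟩

-- lipschitzness of min (· , c)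
lemma min_lip (a b c : ℝ) : |min a c - min b c| ≤ |a - b| := by
  rcases le_total a c with h1 | h1 <;> rcases le_total b c with h2 | h2
  · rw [min_eq_left h1, min_eq_left h2]
  · rw [min_eq_left h1, min_eq_right h2, abs_le]
    constructor <;> linarith [le_abs_self (a - b), neg_abs_le (a - b)]
  · rw [min_eq_right h1, min_eq_left h2, abs_le]
    constructor <;> linarith [le_abs_self (a - b), neg_abs_le (a - b)]
  · rw [min_eq_right h1, min_eq_right h2]; simp [abs_nonneg]

def Uf (hh δ r v : ℝ) : ℝ :=
  min (|v| / hh) δ + (1 - min (|v| / hh) δ) * (r - δ) / (1 - δ)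

lemma Ubounds (hh δ r v : ℝ) (hhh : 0 < hh) (hδ0 : 0 < δ) (hδh : δ < 1 / 2)
    (hr : δ < r) (hr1 : r < 1) (hv : |v| < hh * r) :
    0 < Uf hh δ r v ∧ Uf hh δ r v < 1 ∧ |v| < hh * Uf hh δ r v := by
  have h1δ : (0:ℝ) < 1 - δ := by linarith
  have hs0 : 0 ≤ |v| / hh := by positivity
  have hsr : |v| / hh < r := (div_lt_iff₀' hhh).2 hv
  have hw0 : 0 < (r - δ) / (1 - δ) := div_pos (by linarith) h1δ
  have hw1 : (r - δ) / (1 - δ) < 1 := (div_lt_one h1δ).2 (by linarith)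
  have hUgt : |v| / hh < Uf hh δ r v := by
    rcases le_total (|v| / hh) δ with h | h
    · rw [Uf, min_eq_left h]
      have : 0 < (1 - |v| / hh) * (r - δ) / (1 - δ) := by
        apply div_pos (mul_pos (by linarith) (by linarith)) h1δ
      linarith
    · rw [Uf, min_eq_right h]
      have : δ + (1 - δ) * (r - δ) / (1 - δ) = r := by field_simp; ring
      rw [this]; exact hsr
  have hU0 : 0 < Uf hh δ r v := lt_of_le_of_lt hs0 hUgt
  have hU1 : Uf hh δ r v < 1 := by
    have htδ : min (|v| / hh) δ ≤ δ := min_le_right _ _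
    have ht0 : 0 ≤ min (|v| / hh) δ := le_min hs0 hδ0.le
    have h2 : (1 - min (|v| / hh) δ) * ((r - δ) / (1 - δ)) < 1 - min (|v| / hh) δ := by
      nlinarith
    rw [Uf]
    calc min (|v| / hh) δ + (1 - min (|v| / hh) δ) * (r - δ) / (1 - δ)
        = min (|v| / hh) δ + (1 - min (|v| / hh) δ) * ((r - δ) / (1 - δ)) := by ring
    _ < min (|v| / hh) δ + (1 - min (|v| / hh) δ) := by linarith
    _ = 1 := by ring
  exact ⟨hU0, hU1, by rw [mul_comm]; exact (div_lt_iff₀ hhh).1 hUgt⟩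

lemma coreEst (hh δ r r' v v' : ℝ) (hhh : 0 < hh) (hδ0 : 0 < δ) (hδh : δ < 1 / 2)
    (hr : δ < r) (hr1 : r < 1) (hr' : δ < r') (hr1' : r' < 1) :
    |Uf hh δ r v - Uf hh δ r' v'| ≤ 2 * |r - r'| + (1 / hh) * |v - v'| ∧
    |r - r'| ≤ |Uf hh δ r v - Uf hh δ r' v'| + (1 / hh) * |v - v'| := by
  have h1δ : (0:ℝ) < 1 - δ := by linarith
  set t := min (|v| / hh) δ with htdef
  set t' := min (|v'| / hh) δ with htdef'
  set w := (r - δ) / (1 - δ) with hwdef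
  set w' := (r' - δ) / (1 - δ) with hwdef'
  have ht0 : 0 ≤ t := le_min (by positivity) hδ0.le
  have ht0' : 0 ≤ t' := le_min (by positivity) hδ0.le
  have htδ : t ≤ δ := min_le_right _ _
  have htδ' : t' ≤ δ := min_le_right _ _
  have hw0 : 0 < w := div_pos (by linarith) h1δ
  have hw1 : w < 1 := (div_lt_one h1δ).2 (by linarith)
  have hw0' : 0 < w' := div_pos (by linarith) h1δ
  have hw1' : w' < 1 := (div_lt_one h1δ).2 (by linarith)
  have httv : |t - t'| ≤ |v - v'| / hh := by
    refine le_trans (min_lip _ _ _) ?_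
    rw [show |v| / hh - |v'| / hh = (|v| - |v'|) / hh by ring]
    rw [abs_div, abs_of_pos hhh]
    exact (div_le_div_iff_of_pos_right hhh).2 (abs_abs_sub_abs_le_abs_sub v v')
  have hkey : Uf hh δ r v - Uf hh δ r' v' = (t - t') * (1 - w') + (1 - t) * (w - w') := by
    rw [Uf, Uf, ← htdef, ← htdef', hwdef, hwdef']
    field_simp
    ring
  have hwd : w - w' = (r - r') / (1 - δ) := by rw [hwdef, hwdef']; ring
  have e1 : |(t - t') * (1 - w')| ≤ |t - t'| := by
    rw [abs_mul]
    have h1 : |1 - w'| ≤ 1 := by rw [abs_le]; constructor <;> linarith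
    nlinarith [abs_nonneg (t - t')]
  have e2 : |(1 - t) * (w - w')| ≤ 2 * |r - r'| := by
    rw [abs_mul, hwd, abs_div, abs_of_pos h1δ]
    have h1t : |1 - t| ≤ 1 := by rw [abs_le]; constructor <;> linarith
    have h2 : |r - r'| / (1 - δ) ≤ 2 * |r - r'| := by
      rw [div_le_iff₀ h1δ]; nlinarith [abs_nonneg (r - r')]
    nlinarith [abs_nonneg (r - r'), div_nonneg (abs_nonneg (r - r')) h1δ.le]
  constructor
  · rw [hkey]
    calc |(t - t') * (1 - w') + (1 - t) * (w - w')|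
        ≤ |(t - t') * (1 - w')| + |(1 - t) * (w - w')| := abs_add_le _ _
    _ ≤ 2 * |r - r'| + (1 / hh) * |v - v'| := by
        have : (1 / hh) * |v - v'| = |v - v'| / hh := by ring
        linarith [httv]
  · have hb1 : (1 - δ) * |w - w'| ≤ |(1 - t) * (w - w')| := by
      rw [abs_mul, abs_of_nonneg (show (0:ℝ) ≤ 1 - t by linarith)]
      nlinarith [abs_nonneg (w - w')]
    have hb2 : |(1 - t) * (w - w')| ≤ |Uf hh δ r v - Uf hh δ r' v'| + |t - t'| := by
      have hx : (1 - t) * (w - w') = (Uf hh δ r v - Uf hh δ r' v') - (t - t') * (1 - w') := by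
        rw [hkey]; ring
      rw [hx]
      refine (abs_sub _ _).trans ?_
      linarith [e1]
    have hb3 : (1 - δ) * |w - w'| = |r - r'| := by
      rw [hwd, abs_div, abs_of_pos h1δ]; field_simp
    have : (1 / hh) * |v - v'| = |v - v'| / hh := by ring
    linarith [httv]

open scoped Classical in
def prW (α β δ : ℝ) (x : EuclideanSpace ℝ (Fin 2)) : ℝ :=
  if h : ∃ r θ : ℝ, r ∈ Set.Ioo δ 1 ∧ θ ∈ Set.Ioo α β ∧ x = r • er θ then h.choose else 0

open scoped Classical in
def ptW (α β δ : ℝ) (x : EuclideanSpace ℝ (Fin 2)) : ℝ :=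
  if h : ∃ r θ : ℝ, r ∈ Set.Ioo δ 1 ∧ θ ∈ Set.Ioo α β ∧ x = r • er θ then
    h.choose_spec.choose else 0

lemma prW_spec {α β δ : ℝ} {x : EuclideanSpace ℝ (Fin 2)} (h : x ∈ wedge α β δ) :
    prW α β δ x ∈ Set.Ioo δ 1 ∧ ptW α β δ x ∈ Set.Ioo α β ∧
      x = prW α β δ x • er (ptW α β δ x) := by
  have h' : ∃ r θ : ℝ, r ∈ Set.Ioo δ 1 ∧ θ ∈ Set.Ioo α β ∧ x = r • er θ := h
  rw [prW, ptW, dif_pos h', dif_pos h']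
  exact ⟨h'.choose_spec.choose_spec.1, h'.choose_spec.choose_spec.2.1,
    h'.choose_spec.choose_spec.2.2⟩

def PhiW (α β δ : ℝ) (x : EuclideanSpace ℝ (Fin 2)) : EuclideanSpace ℝ (Fin 2) :=
  Uf ((β - α) / 2) δ (prW α β δ x) (prW α β δ x * (ptW α β δ x - (α + β) / 2)) •
    er ((α + β) / 2 +
      prW α β δ x * (ptW α β δ x - (α + β) / 2) /
        Uf ((β - α) / 2) δ (prW α β δ x) (prW α β δ x * (ptW α β δ x - (α + β) / 2)))

lemma unpack (α β δ : ℝ) (hαβ : α < β) (h2π : β - α < 2 * Real.pi) (hδ0 : 0 < δ)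
    (hδh : δ < 1 / 2) {x : EuclideanSpace ℝ (Fin 2)} (hx : x ∈ wedge α β δ) :
    ∃ a φ : ℝ,
      δ < a ∧ a < 1 ∧ |φ| < (β - α) / 2 ∧
      x = a • er ((α + β) / 2 + φ) ∧
      0 < Uf ((β - α) / 2) δ a (a * φ) ∧ Uf ((β - α) / 2) δ a (a * φ) < 1 ∧
      |a * φ| < (β - α) / 2 * Uf ((β - α) / 2) δ a (a * φ) ∧
      PhiW α β δ x =
        Uf ((β - α) / 2) δ a (a * φ) •
          er ((α + β) / 2 + a * φ / Uf ((β - α) / 2) δ a (a * φ)) := by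
  obtain ⟨hr, hθ, hxe⟩ := prW_spec hx
  have hh0 : 0 < (β - α) / 2 := by linarith
  have hr0 : 0 < prW α β δ x := lt_trans hδ0 hr.1
  have hφ : |ptW α β δ x - (α + β) / 2| < (β - α) / 2 := by
    rw [abs_lt]; exact ⟨by linarith [hθ.1], by linarith [hθ.2]⟩
  have hv : |prW α β δ x * (ptW α β δ x - (α + β) / 2)| <
      (β - α) / 2 * prW α β δ x := by
    rw [abs_mul, abs_of_pos hr0, mul_comm ((β - α) / 2) _]
    exact mul_lt_mul_of_pos_left hφ hr0
  have hU := Ubounds _ δ _ _ hh0 hδ0 hδh hr.1 hr.2 hv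
  exact ⟨prW α β δ x, ptW α β δ x - (α + β) / 2, hr.1, hr.2, hφ,
    by rw [show (α + β) / 2 + (ptW α β δ x - (α + β) / 2) = ptW α β δ x by ring]; exact hxe,
    hU.1, hU.2.1, hU.2.2, rfl⟩



set_option maxHeartbeats 4000000 in
/-- The truncated wedge `Ω_δ` and the full wedge `Ω_0` are bi-Lipschitz
equivalent with a bi-Lipschitz constant uniformly bounded for `δ ∈ (0, 1/2)`. -/
theorem biLipschitz_truncated_wedge (α β : ℝ) (hαβ : α < β) (h2π : β - α < 2 * Real.pi) :
    ∃ K : ℝ, 1 ≤ K ∧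
      ∀ δ ∈ Set.Ioo (0 : ℝ) (1 / 2), ∃ Φ : E2 → E2,
        Set.BijOn Φ (wedge α β δ) (wedge α β 0) ∧
        ∀ x ∈ wedge α β δ, ∀ x' ∈ wedge α β δ,
          (1 / K) * ‖x - x'‖ ≤ ‖Φ x - Φ x'‖ ∧ ‖Φ x - Φ x'‖ ≤ K * ‖x - x'‖ := by
  have hh0 : 0 < (β - α) / 2 := by linarith
  have hhπ : (β - α) / 2 < Real.pi := by linarith
  have hsin : 0 < Real.sin ((β - α) / 2) := Real.sin_pos_of_pos_of_lt_pi hh0 hhπ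
  have hc0 : 0 < 1 / ((β - α) / 2) := by positivity
  have hd0 : 0 < (β - α) / 2 / Real.sin ((β - α) / 2) := by positivity
  refine ⟨5 * (2 + 1 / ((β - α) / 2)) * (5 + (β - α) / 2 / Real.sin ((β - α) / 2)),
    by nlinarith, ?_⟩
  set K := 5 * (2 + 1 / ((β - α) / 2)) * (5 + (β - α) / 2 / Real.sin ((β - α) / 2)) with hKdef
  have hK0 : 0 < K := by rw [hKdef]; positivity
  intro δ hδ
  obtain ⟨hδ0, hδh⟩ := hδ
  -- master two-sided estimate
  have main : ∀ x ∈ wedge α β δ, ∀ x' ∈ wedge α β δ,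
      ‖PhiW α β δ x - PhiW α β δ x'‖ ≤ K * ‖x - x'‖ ∧
      ‖x - x'‖ ≤ K * ‖PhiW α β δ x - PhiW α β δ x'‖ := by
    intro x hx x' hx'
    obtain ⟨a, φ, ha1, ha2, hφ, hxe, hU0, hU1, hUv, hPhi⟩ := unpack α β δ hαβ h2π hδ0 hδh hx
    obtain ⟨b, ψ, hb1, hb2, hψ, hxe', hU0', hU1', hUv', hPhi'⟩ :=
      unpack α β δ hαβ h2π hδ0 hδh hx'
    set U := Uf ((β - α) / 2) δ a (a * φ) with hUdef
    set U' := Uf ((β - α) / 2) δ b (b * ψ) with hUdef'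
    have ha0 : 0 < a := lt_trans hδ0 ha1
    have hb0 : 0 < b := lt_trans hδ0 hb1
    have hφπ : |φ| ≤ Real.pi := le_trans hφ.le hhπ.le
    have hψπ : |ψ| ≤ Real.pi := le_trans hψ.le hhπ.le
    have hN1x : ‖x - x'‖ ≤ 5 * (|a - b| + |a * φ - b * ψ|) := by
      rw [hxe, hxe']; exact N1 _ a b φ ψ ha0.le hb0.le hφπ hψπ
    have hN2x : |a - b| + |a * φ - b * ψ| ≤
        (5 + (β - α) / 2 / Real.sin ((β - α) / 2)) * ‖x - x'‖ := by
      rw [hxe, hxe']; exact N2 _ _ a b φ ψ hh0 hhπ ha0 hb0 hφ.le hψ.le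
    have hφU : |a * φ / U| < (β - α) / 2 := by
      rw [abs_div, abs_of_pos hU0, div_lt_iff₀ hU0]
      calc |a * φ| < (β - α) / 2 * U := hUv
      _ = (β - α) / 2 * U := rfl
    have hψU : |b * ψ / U'| < (β - α) / 2 := by
      rw [abs_div, abs_of_pos hU0', div_lt_iff₀ hU0']
      exact hUv'
    have hvU : U * (a * φ / U) = a * φ := by field_simp
    have hvU' : U' * (b * ψ / U') = b * ψ := by field_simp
    have hN1p : ‖PhiW α β δ x - PhiW α β δ x'‖ ≤ 5 * (|U - U'| + |a * φ - b * ψ|) := by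
      rw [hPhi, hPhi']
      have := N1 ((α + β) / 2) U U' (a * φ / U) (b * ψ / U') hU0.le hU0'.le
        (le_trans hφU.le hhπ.le) (le_trans hψU.le hhπ.le)
      rw [hvU, hvU'] at this
      exact this
    have hN2p : |U - U'| + |a * φ - b * ψ| ≤
        (5 + (β - α) / 2 / Real.sin ((β - α) / 2)) * ‖PhiW α β δ x - PhiW α β δ x'‖ := by
      rw [hPhi, hPhi']
      have := N2 ((α + β) / 2) ((β - α) / 2) U U' (a * φ / U) (b * ψ / U') hh0 hhπ hU0 hU0'
        hφU.le hψU.le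
      rw [hvU, hvU'] at this
      exact this
    have hcore := coreEst ((β - α) / 2) δ a b (a * φ) (b * ψ) hh0 hδ0 hδh ha1 ha2 hb1 hb2
    rw [← hUdef, ← hUdef'] at hcore
    have hA0 : 0 ≤ |a - b| := abs_nonneg _
    have hB0 : 0 ≤ |a * φ - b * ψ| := abs_nonneg _
    have hAU0 : 0 ≤ |U - U'| := abs_nonneg _
    have hx0 : 0 ≤ ‖x - x'‖ := norm_nonneg _
    have hp0 : 0 ≤ ‖PhiW α β δ x - PhiW α β δ x'‖ := norm_nonneg _
    have hfac : (0:ℝ) ≤ 5 * (2 + 1 / ((β - α) / 2)) := by positivity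
    constructor
    · have h4 := mul_le_mul_of_nonneg_left hN2x hfac
      rw [hKdef]
      nlinarith [hcore.1, hN1p, mul_nonneg hc0.le hA0, mul_nonneg hc0.le hB0]
    · have h4 := mul_le_mul_of_nonneg_left hN2p hfac
      rw [hKdef]
      nlinarith [hcore.2, hN1x, mul_nonneg hc0.le hAU0, mul_nonneg hc0.le hB0]
  -- maps to
  have hmaps : ∀ x ∈ wedge α β δ, PhiW α β δ x ∈ wedge α β 0 := by
    intro x hx
    obtain ⟨a, φ, ha1, ha2, hφ, hxe, hU0, hU1, hUv, hPhi⟩ := unpack α β δ hαβ h2π hδ0 hδh hx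
    have hφU : |a * φ / Uf ((β - α) / 2) δ a (a * φ)| < (β - α) / 2 := by
      rw [abs_div, abs_of_pos hU0, div_lt_iff₀ hU0]
      exact hUv
    obtain ⟨g1, g2⟩ := abs_lt.1 hφU
    exact ⟨Uf ((β - α) / 2) δ a (a * φ),
      (α + β) / 2 + a * φ / Uf ((β - α) / 2) δ a (a * φ), ⟨hU0, hU1⟩,
      ⟨by linarith, by linarith⟩, hPhi⟩
  -- surjectivity
  have hsurj : ∀ y ∈ wedge α β 0, ∃ x ∈ wedge α β δ, PhiW α β δ x = y := by
    intro y hy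
    obtain ⟨R, Θ, hR, hΘ, hye⟩ := hy
    have hR0 : 0 < R := hR.1
    have hΘm : |Θ - (α + β) / 2| < (β - α) / 2 :=
      abs_lt.2 ⟨by linarith [hΘ.1], by linarith [hΘ.2]⟩
    set V := R * (Θ - (α + β) / 2) with hVdef
    set S := |V| / ((β - α) / 2) with hSdef
    have hS0 : 0 ≤ S := by positivity
    have hSR : S < R := by
      rw [hSdef, div_lt_iff₀ hh0, hVdef, abs_mul, abs_of_pos hR0]
      exact mul_lt_mul_of_pos_left hΘm hR0
    have hVS : |V| = S * ((β - α) / 2) := by rw [hSdef, div_mul_cancel₀ _ hh0.ne']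
    have hVR : V / R = Θ - (α + β) / 2 := by
      rw [hVdef, mul_comm, mul_div_assoc, div_self hR0.ne', mul_one]
    have h1δ : (0:ℝ) < 1 - δ := by linarith
    rcases le_or_gt δ S with hcase | hcase
    · have hxw : y ∈ wedge α β δ :=
        ⟨R, Θ, ⟨lt_of_le_of_lt hcase hSR, hR.2⟩, hΘ, hye⟩
      refine ⟨y, hxw, ?_⟩
      obtain ⟨h1, h2, h3⟩ := prW_spec hxw
      obtain ⟨hpr, hpt⟩ := polar_unique (prW α β δ y) R (ptW α β δ y) Θ
        (lt_trans hδ0 h1.1) hR0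
        (by rw [abs_lt]
            exact ⟨by linarith [h2.1, hΘ.2], by linarith [h2.2, hΘ.1]⟩)
        (h3.symm.trans hye)
      rw [PhiW, hpr, hpt, ← hVdef]
      have hUf : Uf ((β - α) / 2) δ R V = R := by
        rw [Uf, ← hSdef, min_eq_right hcase]
        field_simp
        ring
      rw [hUf, hVR, show (α + β) / 2 + (Θ - (α + β) / 2) = Θ by ring]
      exact hye.symm
    · set r0 := δ + (1 - δ) * (R - S) / (1 - S) with hr0def
      have h1S : (0:ℝ) < 1 - S := by linarith
      have hr0δ : δ < r0 := by
        rw [hr0def]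
        have : 0 < (1 - δ) * (R - S) / (1 - S) :=
          div_pos (mul_pos h1δ (by linarith)) h1S
        linarith
      have hr01 : r0 < 1 := by
        rw [hr0def]
        have h6 : (1 - δ) * (R - S) / (1 - S) < 1 - δ := by
          rw [div_lt_iff₀ h1S]
          nlinarith [hR.2]
        linarith
      have hr00 : 0 < r0 := lt_trans hδ0 hr0δ
      set θ0 := (α + β) / 2 + V / r0 with hθ0def
      have hVr0 : |V / r0| < (β - α) / 2 := by
        rw [abs_div, abs_of_pos hr00, div_lt_iff₀ hr00]
        rw [hVS]
        have hSr0 : S < r0 := lt_trans hcase hr0δ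
        nlinarith [mul_lt_mul_of_pos_left hSr0 hh0]
      have hθ0mem : θ0 ∈ Set.Ioo α β := by
        obtain ⟨g1, g2⟩ := abs_lt.1 hVr0
        rw [hθ0def]
        exact ⟨by linarith, by linarith⟩
      have hxw : (r0 • er θ0 : EuclideanSpace ℝ (Fin 2)) ∈ wedge α β δ :=
        ⟨r0, θ0, ⟨hr0δ, hr01⟩, hθ0mem, rfl⟩
      refine ⟨r0 • er θ0, hxw, ?_⟩
      obtain ⟨h1, h2, h3⟩ := prW_spec hxw
      obtain ⟨hpr, hpt⟩ := polar_unique (prW α β δ (r0 • er θ0)) r0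
        (ptW α β δ (r0 • er θ0)) θ0 (lt_trans hδ0 h1.1) hr00
        (by rw [abs_lt]
            exact ⟨by linarith [h2.1, hθ0mem.2], by linarith [h2.2, hθ0mem.1]⟩)
        h3.symm
      rw [PhiW, hpr, hpt]
      have hv0 : r0 * (θ0 - (α + β) / 2) = V := by
        rw [hθ0def]
        field_simp
        ring
      rw [hv0]
      have hUfr : Uf ((β - α) / 2) δ r0 V = R := by
        rw [Uf, ← hSdef, min_eq_left hcase.le, hr0def]
        field_simp
        ring
      rw [hUfr, hVR, show (α + β) / 2 + (Θ - (α + β) / 2) = Θ by ring]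
      exact hye.symm
  refine ⟨PhiW α β δ, ⟨hmaps, ?_, ?_⟩, ?_⟩
  · -- InjOn
    intro x hx x' hx' heq
    have h2 := (main x hx x' hx').2
    rw [heq, sub_self, norm_zero, mul_zero] at h2
    have h3 : ‖x - x'‖ = 0 := le_antisymm h2 (norm_nonneg _)
    exact sub_eq_zero.1 (norm_eq_zero.1 h3)
  · -- SurjOn
    intro y hy
    obtain ⟨x, hxw, hPhix⟩ := hsurj y hy
    exact ⟨x, hxw, hPhix⟩
  · -- bounds
    intro x hx x' hx'
    have hm := main x hx x' hx'
    constructor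
    · rw [one_div, inv_mul_le_iff₀ hK0]
      exact hm.2
    · exact hm.1
end
end

section
/- For every δ ∈ (0, 1/2) and every x₂ ∈ ℝ with |x₂| ≤ δ/√2, the denominator √(1 − x₂²) − √(δ² − x₂²) is positive and the quantity a_δ(x₂) = (√(1 − x₂²) − |x₂|) / (√(1 − x₂²) − √(δ² − x₂²)) satisfies 1 ≤ a_δ(x₂) ≤ 1/(1 − δ) ≤ 2. -/
/-! With `s = √(1 - x₂²)` and `t = √(δ² - x₂²)`, the hypothesis `2 x₂² ≤ δ²` gives `|x₂| ≤ t`, and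
`δ ≤ 1` gives `t ≤ δ s < s`. Hence the numerator `s - |x₂|` lies between the denominator `s - t`
and `s`, while `s - t ≥ (1 - δ) s`. -/

namespace Real

lemma two_mul_sq_le_sq_of_abs_le_div_sqrt_two {x d : ℝ} (h : |x| ≤ d / √2) : 2 * x ^ 2 ≤ d ^ 2 := by
  have hsq := pow_le_pow_left₀ (abs_nonneg x) h 2
  rw [sq_abs, div_pow, sq_sqrt zero_le_two] at hsq
  linarith

lemma abs_le_sqrt_sub_sq {x c : ℝ} (h : 2 * x ^ 2 ≤ c) : |x| ≤ √(c - x ^ 2) := by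
  rw [← sqrt_sq_eq_abs]
  exact sqrt_le_sqrt (by linarith)

lemma sqrt_sq_sub_sq_le_mul_sqrt_one_sub_sq {δ : ℝ} (x : ℝ) (hδ₀ : 0 ≤ δ) (hδ₁ : δ ≤ 1) :
    √(δ ^ 2 - x ^ 2) ≤ δ * √(1 - x ^ 2) :=
  calc √(δ ^ 2 - x ^ 2) ≤ √(δ ^ 2 * (1 - x ^ 2)) :=
        sqrt_le_sqrt (by nlinarith [mul_nonneg (sq_nonneg x) (by nlinarith : 0 ≤ 1 - δ ^ 2)])
    _ = δ * √(1 - x ^ 2) := by rw [sqrt_mul (sq_nonneg δ), sqrt_sq hδ₀]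

end Real

lemma one_le_sub_div_sub {s t u : ℝ} (hut : u ≤ t) (hts : t < s) : 1 ≤ (s - u) / (s - t) :=
  (one_le_div (sub_pos.2 hts)).2 (by linarith)

lemma sub_div_sub_le_one_div_one_sub {s t u δ : ℝ} (hu : 0 ≤ u) (ht : t ≤ δ * s) (hδ : δ < 1)
    (hts : t < s) : (s - u) / (s - t) ≤ 1 / (1 - δ) := by
  rw [div_le_div_iff₀ (sub_pos.2 hts) (sub_pos.2 hδ)]
  nlinarith [mul_nonneg hu (sub_nonneg.2 hδ.le)]

/-- For `δ ∈ (0, 1/2)` and `|x₂| ≤ δ/√2`, the denominator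
`√(1 − x₂²) − √(δ² − x₂²)` is positive and the stretch factor
`a_δ(x₂) = (√(1 − x₂²) − |x₂|) / (√(1 − x₂²) − √(δ² − x₂²))` satisfies
`1 ≤ a_δ(x₂) ≤ 1/(1 − δ) ≤ 2`. -/
theorem stretch_factor_bounds (δ x₂ : ℝ) (hδ : δ ∈ Set.Ioo (0 : ℝ) (1 / 2))
    (hx : |x₂| ≤ δ / Real.sqrt 2) :
    0 < Real.sqrt (1 - x₂ ^ 2) - Real.sqrt (δ ^ 2 - x₂ ^ 2) ∧
    1 ≤ (Real.sqrt (1 - x₂ ^ 2) - |x₂|) /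
        (Real.sqrt (1 - x₂ ^ 2) - Real.sqrt (δ ^ 2 - x₂ ^ 2)) ∧
    (Real.sqrt (1 - x₂ ^ 2) - |x₂|) /
        (Real.sqrt (1 - x₂ ^ 2) - Real.sqrt (δ ^ 2 - x₂ ^ 2)) ≤ 1 / (1 - δ) ∧
    1 / (1 - δ) ≤ 2 := by
  obtain ⟨hδ₀, hδ₁⟩ := hδ
  have hx₂ : 2 * x₂ ^ 2 ≤ δ ^ 2 := Real.two_mul_sq_le_sq_of_abs_le_div_sqrt_two hx
  have hxt : |x₂| ≤ √(δ ^ 2 - x₂ ^ 2) := Real.abs_le_sqrt_sub_sq hx₂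
  have hts : √(δ ^ 2 - x₂ ^ 2) ≤ δ * √(1 - x₂ ^ 2) :=
    Real.sqrt_sq_sub_sq_le_mul_sqrt_one_sub_sq x₂ hδ₀.le (by linarith)
  have hlt : √(δ ^ 2 - x₂ ^ 2) < √(1 - x₂ ^ 2) :=
    Real.sqrt_lt_sqrt (by nlinarith) (by nlinarith)
  refine ⟨sub_pos.2 hlt, one_le_sub_div_sub hxt hlt,
    sub_div_sub_le_one_div_one_sub (abs_nonneg x₂) hts (by linarith) hlt, ?_⟩
  rw [div_le_iff₀ (by linarith)]
  linarith
end

section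
/- Let δ ∈ (0, 1) and let y : ℝ² → ℝ² be differentiable on Ω_δ with ‖∇y‖_{L²(Ω_δ)} < ∞. Then: (i) R_δ(y) = SO(2) if and only if ∫_{Ω_δ} ( ∇y(x)e₁ − (∇y(x)e₂)^⊥ ) dx = 0; (ii) if this integral is nonzero, then R_δ(y) consists of exactly one rotation; and (iii) for every R ∈ R_δ(y), ∫_{Ω_δ} skw( Rᵀ ∇y(x) ) dx = 0. -/
open MeasureTheory Set
open scoped ENNReal RealInnerProductSpace

noncomputable section

/-! ### Auxiliary lemmas -/

theorem mem_SO2_iff (R : M2) :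
    R ∈ SO2 ↔ ((R 0 0)^2 + (R 1 0)^2 = 1 ∧ R 1 1 = R 0 0 ∧ R 0 1 = -(R 1 0)) := by
  constructor
  · rintro ⟨h1, h2⟩
    have e00 := congrFun (congrFun h1 0) 0
    have e01 := congrFun (congrFun h1 0) 1
    have e11 := congrFun (congrFun h1 1) 1
    simp [Matrix.mul_apply, Fin.sum_univ_two, Matrix.one_apply] at e00 e01 e11
    rw [Matrix.det_fin_two] at h2
    refine ⟨by linear_combination e00,
      by linear_combination -(R 1 1)*e00 + (R 0 0)*h2 + (R 1 0)*e01,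
      by linear_combination -(R 1 0)*e11 - (R 0 1)*h2 + (R 1 1)*e01⟩
  · rintro ⟨h1, h2, h3⟩
    constructor
    · ext i j
      fin_cases i <;> fin_cases j <;>
        simp [Matrix.mul_apply, Fin.sum_univ_two, Matrix.one_apply, h2, h3] <;> linarith [h1]
    · rw [Matrix.det_fin_two, h2, h3]; linear_combination h1

def Rot (c u : ℝ) : M2 := !![c, -u; u, c]

theorem Rot_mem_SO2 {c u : ℝ} (h : c^2 + u^2 = 1) : Rot c u ∈ SO2 := by
  rw [mem_SO2_iff]
  refine ⟨?_, ?_, ?_⟩ <;> simp [Rot] <;> linarith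

def Tc : ℂ → E2 := fun z =>
  z.re • EuclideanSpace.single (0 : Fin 2) (1 : ℝ) +
    z.im • EuclideanSpace.single (1 : Fin 2) (1 : ℝ)

theorem Tc_open : IsOpenMap Tc := by
  have hcont : Continuous Tc := by unfold Tc; fun_prop
  have hinv : Continuous (fun x : E2 => (⟨x 0, x 1⟩ : ℂ)) := by
    have h : ∀ x : E2, (⟨x 0, x 1⟩ : ℂ) = Complex.equivRealProdCLM.symm (x 0, x 1) := by
      intro x; apply Complex.ext <;> simp
    simp only [h]; fun_prop
  have : IsOpenMap (Homeomorph.mk ⟨Tc, fun x => (⟨x 0, x 1⟩ : ℂ), ?_, ?_⟩ hcont hinv) :=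
    Homeomorph.isOpenMap _
  · exact this
  · intro z
    apply Complex.ext <;> simp [Tc, EuclideanSpace.single_apply]
  · intro x
    ext i
    fin_cases i <;> simp [Tc, EuclideanSpace.single_apply]

theorem isOpen_wedge (α β δ : ℝ) (hδ : 0 < δ) : IsOpen (wedge α β δ) := by
  have hS : IsOpen {z : ℂ | z.re ∈ Set.Ioo (Real.log δ) 0 ∧ z.im ∈ Set.Ioo α β} :=
    ((isOpen_Ioo).preimage Complex.continuous_re).inter
      ((isOpen_Ioo).preimage Complex.continuous_im)
  have key : wedge α β δ =
      Tc '' (Complex.exp '' {z : ℂ | z.re ∈ Set.Ioo (Real.log δ) 0 ∧ z.im ∈ Set.Ioo α β}) := by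
    ext x
    constructor
    · rintro ⟨r, θ, ⟨hr1, hr2⟩, hθ, rfl⟩
      have hr0 : 0 < r := lt_trans hδ hr1
      refine ⟨Complex.exp ⟨Real.log r, θ⟩, ⟨⟨Real.log r, θ⟩, ⟨⟨?_, ?_⟩, hθ⟩, rfl⟩, ?_⟩
      · exact Real.log_lt_log hδ hr1
      · exact Real.log_neg hr0 hr2
      · ext i
        have hre : (Complex.exp ⟨Real.log r, θ⟩).re = r * Real.cos θ := by
          rw [Complex.exp_re]; simp [Real.exp_log hr0]
        have him : (Complex.exp ⟨Real.log r, θ⟩).im = r * Real.sin θ := by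
          rw [Complex.exp_im]; simp [Real.exp_log hr0]
        fin_cases i <;> simp [Tc, hre, him, er, EuclideanSpace.single_apply]
    · rintro ⟨w, ⟨z, ⟨⟨hz1, hz2⟩, hzim⟩, rfl⟩, rfl⟩
      refine ⟨Real.exp z.re, z.im, ⟨?_, ?_⟩, hzim, ?_⟩
      · calc δ = Real.exp (Real.log δ) := (Real.exp_log hδ).symm
          _ < Real.exp z.re := Real.exp_lt_exp.2 hz1
      · calc Real.exp z.re < Real.exp 0 := Real.exp_lt_exp.2 hz2
          _ = 1 := Real.exp_zero
      · ext i
        fin_cases i <;>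
          simp [Tc, Complex.exp_re, Complex.exp_im, er, EuclideanSpace.single_apply]
  rw [key]
  exact Tc_open _ (Complex.isOpenMap_exp _ hS)

theorem norm_er (θ : ℝ) : ‖er θ‖ = 1 := by
  rw [EuclideanSpace.norm_eq]
  have h0 : er θ 0 = Real.cos θ := by simp [er, EuclideanSpace.single_apply]
  have h1 : er θ 1 = Real.sin θ := by simp [er, EuclideanSpace.single_apply]
  simp only [Fin.sum_univ_two, Real.norm_eq_abs, sq_abs]
  rw [h0, h1,
    show Real.cos θ ^ 2 + Real.sin θ ^ 2 = 1 from by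
      rw [add_comm]; exact Real.sin_sq_add_cos_sq θ]
  exact Real.sqrt_one

theorem frob_sq4 (A : M2) :
    frob A ^ 2 = A 0 0 ^ 2 + A 0 1 ^ 2 + A 1 0 ^ 2 + A 1 1 ^ 2 := by
  rw [frob, Real.sq_sqrt (by positivity)]
  simp [Fin.sum_univ_two]; ring

set_option maxHeartbeats 2000000 in
/-- Characterization of the set of optimal rotations: `R_δ(y) = SO(2)` iff
`∫_{Ω_δ} (∇y e₁ − (∇y e₂)^⊥) dx = 0`; if this integral is nonzero then `R_δ(y)` is a
singleton; and every `R ∈ R_δ(y)` satisfies `∫_{Ω_δ} skw(Rᵀ ∇y) dx = 0`. -/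
theorem optimal_rotations_characterization (α β : ℝ) (hαβ : α < β)
    (h2π : β - α < 2 * Real.pi) (δ : ℝ) (hδ : δ ∈ Set.Ioo (0 : ℝ) 1)
    (y : E2 → E2) (G : E2 → M2)
    (hdiff : ∀ x ∈ wedge α β δ, HasFDerivAt y (mclm (G x)) x)
    (hfin : lpM 2 (wedge α β δ) G ≠ ⊤) :
    (Rset (wedge α β δ) G = SO2 ↔
      (∫ x in wedge α β δ,
        ((G x).mulVec ![1, 0] - perp ((G x).mulVec ![0, 1]))) = 0) ∧
    ((∫ x in wedge α β δ,
        ((G x).mulVec ![1, 0] - perp ((G x).mulVec ![0, 1]))) ≠ 0 →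
      ∃ R : M2, Rset (wedge α β δ) G = {R}) ∧
    (∀ R ∈ Rset (wedge α β δ) G, ∀ i j : Fin 2,
      (∫ x in wedge α β δ, skw2 (R.transpose * G x) i j) = 0) := by
  obtain ⟨hδ0, hδ1⟩ := hδ
  set s : Set E2 := wedge α β δ with hs
  set μ : Measure E2 := volume.restrict s with hμ
  have hsopen : IsOpen s := isOpen_wedge α β δ hδ0
  have hsm : MeasurableSet s := hsopen.measurableSet
  -- finiteness of the measure
  have hsub : s ⊆ Metric.ball (0 : E2) 1 := by
    rintro x ⟨r, θ, ⟨hr1, hr2⟩, hθ, rfl⟩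
    have hr0 : 0 < r := lt_trans hδ0 hr1
    simp only [Metric.mem_ball, dist_eq_norm, sub_zero]
    rw [norm_smul, norm_er, Real.norm_eq_abs, abs_of_pos hr0, mul_one]
    exact hr2
  haveI hfinμ : IsFiniteMeasure μ := ⟨by
    rw [hμ, Measure.restrict_apply_univ]
    exact lt_of_le_of_lt (measure_mono hsub) measure_ball_lt_top⟩
  -- measurability of G on s
  have hFmeas : ∀ i j : Fin 2,
      Measurable (fun x : E2 => fderiv ℝ y x (EuclideanSpace.single j 1) i) := by
    intro i j
    have h1 : Continuous (fun L : E2 →L[ℝ] E2 => L (EuclideanSpace.single j 1) i) := by fun_prop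
    exact h1.measurable.comp (measurable_fderiv ℝ y)
  have hGae : ∀ i j : Fin 2,
      (fun x => G x i j) =ᵐ[μ] fun x => fderiv ℝ y x (EuclideanSpace.single j 1) i := by
    intro i j
    rw [hμ]
    refine (ae_restrict_iff' hsm).2 (Filter.Eventually.of_forall fun x hx => ?_)
    have h1 : fderiv ℝ y x = mclm (G x) := (hdiff x hx).fderiv
    show G x i j = fderiv ℝ y x (EuclideanSpace.single j 1) i
    rw [h1]
    simp [mclm, Matrix.toEuclideanLin_apply]
  have hGaem : ∀ i j : Fin 2, AEMeasurable (fun x => G x i j) μ := fun i j =>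
    ((hFmeas i j).aemeasurable).congr (hGae i j).symm
  -- L² bound
  have hI2 : (∫⁻ x, ENNReal.ofReal (frob (G x) ^ (2 : ℝ)) ∂μ) ≠ ⊤ := by
    intro h
    apply hfin
    have heq : lpM 2 s G
        = (∫⁻ x, ENNReal.ofReal (frob (G x) ^ (2 : ℝ)) ∂μ) ^ (1 / (2 : ℝ)) := rfl
    rw [heq, h]
    exact ENNReal.top_rpow_of_pos (by norm_num)
  have hsq : ∀ i j : Fin 2, Integrable (fun x => (G x i j) ^ 2) μ := by
    intro i j
    refine ⟨((hGaem i j).pow aemeasurable_const).aestronglyMeasurable, ?_⟩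
    rw [hasFiniteIntegral_iff_norm]
    have hb : ∀ x : E2, ENNReal.ofReal ‖(G x i j) ^ 2‖ ≤
        ENNReal.ofReal (frob (G x) ^ (2 : ℝ)) := by
      intro x
      apply ENNReal.ofReal_le_ofReal
      rw [Real.norm_eq_abs, abs_of_nonneg (sq_nonneg _),
        show ((2 : ℝ)) = ((2 : ℕ) : ℝ) by norm_num, Real.rpow_natCast]
      have h4 : frob (G x) ^ 2 = ∑ i', ∑ j', (G x i' j') ^ 2 :=
        Real.sq_sqrt (by positivity)
      have hb1 : (G x i j) ^ 2 ≤ ∑ j', (G x i j') ^ 2 :=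
        Finset.single_le_sum (f := fun j' => (G x i j') ^ 2)
          (fun k _ => sq_nonneg _) (Finset.mem_univ j)
      have hb2 : (∑ j', (G x i j') ^ 2) ≤ ∑ i', ∑ j', (G x i' j') ^ 2 :=
        Finset.single_le_sum (f := fun i' => ∑ j', (G x i' j') ^ 2)
          (fun k _ => Finset.sum_nonneg fun _ _ => sq_nonneg _)
          (Finset.mem_univ i)
      linarith
    exact lt_of_le_of_lt (lintegral_mono hb) (lt_top_iff_ne_top.2 hI2)
  have hint : ∀ i j : Fin 2, Integrable (fun x => G x i j) μ := by
    intro i j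
    refine Integrable.mono' ((integrable_const (1 : ℝ)).add (hsq i j))
      (hGaem i j).aestronglyMeasurable (Filter.Eventually.of_forall fun x => ?_)
    rw [Real.norm_eq_abs]
    simp only [Pi.add_apply]
    nlinarith [sq_nonneg (|G x i j| - 1), sq_abs (G x i j), abs_nonneg (G x i j)]
  -- the two key moments
  set a : ℝ := ∫ x, (G x 0 0 + G x 1 1) ∂μ with ha
  set b : ℝ := ∫ x, (G x 1 0 - G x 0 1) ∂μ with hb
  have hainta : Integrable (fun x => G x 0 0 + G x 1 1) μ := (hint 0 0).add (hint 1 1)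
  have haintb : Integrable (fun x => G x 1 0 - G x 0 1) μ := (hint 1 0).sub (hint 0 1)
  have hlin : ∀ c d : ℝ,
      (∫ x, (c * (G x 0 0 + G x 1 1) + d * (G x 1 0 - G x 0 1)) ∂μ) = c * a + d * b := by
    intro c d
    rw [integral_add (hainta.const_mul c) (haintb.const_mul d),
      integral_const_mul, integral_const_mul]
  -- pointwise expansion of the frobenius distance
  have hfR : ∀ (R : M2) (x : E2), frob (G x - R) ^ 2 =
      (G x 0 0 - R 0 0)^2 + (G x 0 1 - R 0 1)^2 + (G x 1 0 - R 1 0)^2 + (G x 1 1 - R 1 1)^2 := by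
    intro R x
    rw [frob_sq4]
    simp [Matrix.sub_apply]
  have hfR_int : ∀ R : M2, Integrable (fun x => frob (G x - R) ^ 2) μ := by
    intro R
    have hterm : ∀ (i j : Fin 2) (c : ℝ), Integrable (fun x => (G x i j - c) ^ 2) μ := by
      intro i j c
      have h : (fun x => (G x i j - c) ^ 2)
          = fun x => (G x i j) ^ 2 + ((-2 * c) * G x i j + c ^ 2) := by
        funext x; ring
      rw [h]
      exact (hsq i j).add (((hint i j).const_mul _).add (integrable_const _))
    have h : (fun x => frob (G x - R) ^ 2) = fun x =>
        ((G x 0 0 - R 0 0)^2 + (G x 0 1 - R 0 1)^2) +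
          ((G x 1 0 - R 1 0)^2 + (G x 1 1 - R 1 1)^2) := by
      funext x; rw [hfR]; ring
    rw [h]
    exact ((hterm 0 0 _).add (hterm 0 1 _)).add ((hterm 1 0 _).add (hterm 1 1 _))
  -- lintegral = ofReal of integral
  have hlint : ∀ R : M2, (∫⁻ x, ENNReal.ofReal (frob (G x - R) ^ 2) ∂μ)
      = ENNReal.ofReal (∫ x, frob (G x - R) ^ 2 ∂μ) :=
    fun R => (ofReal_integral_eq_lintegral_ofReal (hfR_int R)
      (Filter.Eventually.of_forall fun x => sq_nonneg _)).symm
  -- comparing integrals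
  have hIdiff : ∀ R ∈ SO2, ∀ Q ∈ SO2,
      (∫ x, frob (G x - R) ^ 2 ∂μ) - (∫ x, frob (G x - Q) ^ 2 ∂μ)
        = 2 * ((Q 0 0 * a + Q 1 0 * b) - (R 0 0 * a + R 1 0 * b)) := by
    intro R hR Q hQ
    obtain ⟨hR1, hR2, hR3⟩ := (mem_SO2_iff R).1 hR
    obtain ⟨hQ1, hQ2, hQ3⟩ := (mem_SO2_iff Q).1 hQ
    rw [← integral_sub (hfR_int R) (hfR_int Q)]
    have h : (fun x => frob (G x - R) ^ 2 - frob (G x - Q) ^ 2) = fun x =>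
        (2 * (Q 0 0 - R 0 0)) * (G x 0 0 + G x 1 1)
          + (2 * (Q 1 0 - R 1 0)) * (G x 1 0 - G x 0 1) := by
      funext x
      rw [hfR, hfR, hR2, hR3, hQ2, hQ3]
      linear_combination 2 * hR1 - 2 * hQ1
    rw [h, hlin]
    ring
  -- characterization of Rset
  have hchar : ∀ R : M2, R ∈ Rset s G ↔
      (R ∈ SO2 ∧ ∀ Q ∈ SO2, Q 0 0 * a + Q 1 0 * b ≤ R 0 0 * a + R 1 0 * b) := by
    intro R
    constructor
    · rintro ⟨hR, hopt⟩
      refine ⟨hR, fun Q hQ => ?_⟩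
      have h := hopt Q hQ
      rw [show (∫⁻ x in s, ENNReal.ofReal (frob (G x - R) ^ 2)) =
        ∫⁻ x, ENNReal.ofReal (frob (G x - R) ^ 2) ∂μ from rfl,
        show (∫⁻ x in s, ENNReal.ofReal (frob (G x - Q) ^ 2)) =
        ∫⁻ x, ENNReal.ofReal (frob (G x - Q) ^ 2) ∂μ from rfl, hlint R, hlint Q,
        ENNReal.ofReal_le_ofReal_iff
          (integral_nonneg fun x => sq_nonneg _)] at h
      have h2 := hIdiff R hR Q hQ
      linarith
    · rintro ⟨hR, hopt⟩
      refine ⟨hR, fun Q hQ => ?_⟩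
      have h := hopt Q hQ
      have h2 := hIdiff R hR Q hQ
      rw [show (∫⁻ x in s, ENNReal.ofReal (frob (G x - R) ^ 2)) =
        ∫⁻ x, ENNReal.ofReal (frob (G x - R) ^ 2) ∂μ from rfl,
        show (∫⁻ x in s, ENNReal.ofReal (frob (G x - Q) ^ 2)) =
        ∫⁻ x, ENNReal.ofReal (frob (G x - Q) ^ 2) ∂μ from rfl, hlint R, hlint Q]
      exact ENNReal.ofReal_le_ofReal (by linarith)
  -- the vector integral equals ![a, b]
  have hVeq : (∫ x, ((G x).mulVec ![1, 0] - perp ((G x).mulVec ![0, 1])) ∂μ)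
      = ![a, b] := by
    have hcomp : (fun x => (G x).mulVec ![1, 0] - perp ((G x).mulVec ![0, 1]))
        = fun x => (G x 0 0 + G x 1 1) • (![1, 0] : Fin 2 → ℝ)
            + (G x 1 0 - G x 0 1) • (![0, 1] : Fin 2 → ℝ) := by
      funext x
      funext i
      fin_cases i <;>
        simp [Matrix.mulVec, dotProduct, Fin.sum_univ_two, perp] <;> ring
    rw [hcomp, integral_add (hainta.smul_const _) (haintb.smul_const _),
      integral_smul_const, integral_smul_const]
    funext i
    fin_cases i <;> simp [← ha, ← hb]
  have hV0 : (∫ x, ((G x).mulVec ![1, 0] - perp ((G x).mulVec ![0, 1])) ∂μ) = 0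
      ↔ (a = 0 ∧ b = 0) := by
    rw [hVeq]
    constructor
    · intro h
      exact ⟨by simpa using congrFun h 0, by simpa using congrFun h 1⟩
    · rintro ⟨h1, h2⟩
      funext i
      fin_cases i <;> simp [h1, h2]
  -- uniqueness forcing
  have hforce : ∀ R : M2, R ∈ Rset s G → R 1 0 * a = R 0 0 * b := by
    intro R hRmem
    obtain ⟨hR, hopt⟩ := (hchar R).1 hRmem
    obtain ⟨hR1, hR2, hR3⟩ := (mem_SO2_iff R).1 hR
    by_cases hab : a = 0 ∧ b = 0
    · rw [hab.1, hab.2]; ring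
    · set n : ℝ := Real.sqrt (a ^ 2 + b ^ 2) with hn
      have habpos : 0 < a ^ 2 + b ^ 2 := by
        rcases not_and_or.1 hab with h | h <;>
          nlinarith [sq_nonneg a, sq_nonneg b, sq_abs a, sq_abs b,
            abs_pos.2 h]
      have hnpos : 0 < n := Real.sqrt_pos.2 habpos
      have hnne : n ≠ 0 := ne_of_gt hnpos
      have hn2 : n ^ 2 = a ^ 2 + b ^ 2 := Real.sq_sqrt (le_of_lt habpos)
      -- the optimal rotation candidate
      have hmem : Rot (a / n) (b / n) ∈ SO2 := by
        apply Rot_mem_SO2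
        field_simp
        nlinarith [hn2]
      have hge := hopt _ hmem
      have hQ00 : Rot (a / n) (b / n) 0 0 = a / n := by simp [Rot]
      have hQ10 : Rot (a / n) (b / n) 1 0 = b / n := by simp [Rot]
      rw [hQ00, hQ10] at hge
      have hgen : n ≤ R 0 0 * a + R 1 0 * b := by
        have h : a / n * a + b / n * b = n := by
          field_simp
          nlinarith [hn2]
        linarith [hge, h.symm.le]
      have hz : (n * R 0 0 - a) ^ 2 + (n * R 1 0 - b) ^ 2 ≤ 0 := by
        have hexp : (n * R 0 0 - a) ^ 2 + (n * R 1 0 - b) ^ 2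
            = 2 * n ^ 2 - 2 * n * (R 0 0 * a + R 1 0 * b) := by
          linear_combination n ^ 2 * hR1 - hn2
        rw [hexp]
        nlinarith [hgen, hnpos]
      have h1 : n * R 0 0 = a := by nlinarith [sq_nonneg (n * R 0 0 - a), sq_nonneg (n * R 1 0 - b)]
      have h2 : n * R 1 0 = b := by nlinarith [sq_nonneg (n * R 0 0 - a), sq_nonneg (n * R 1 0 - b)]
      nlinarith [h1, h2]
  refine ⟨⟨?_, ?_⟩, ?_, ?_⟩
  · -- Rset = SO2 → V = 0
    intro h
    rw [hV0]
    have h1 : Rot 1 0 ∈ Rset s G := by rw [h]; exact Rot_mem_SO2 (by norm_num)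
    have h2 : Rot (-1) 0 ∈ Rset s G := by rw [h]; exact Rot_mem_SO2 (by norm_num)
    have h3 : Rot 0 1 ∈ Rset s G := by rw [h]; exact Rot_mem_SO2 (by norm_num)
    have h4 : Rot 0 (-1) ∈ Rset s G := by rw [h]; exact Rot_mem_SO2 (by norm_num)
    have g1 := ((hchar _).1 h1).2 _ (Rot_mem_SO2 (c := -1) (u := 0) (by norm_num))
    have g2 := ((hchar _).1 h2).2 _ (Rot_mem_SO2 (c := 1) (u := 0) (by norm_num))
    have g3 := ((hchar _).1 h3).2 _ (Rot_mem_SO2 (c := 0) (u := -1) (by norm_num))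
    have g4 := ((hchar _).1 h4).2 _ (Rot_mem_SO2 (c := 0) (u := 1) (by norm_num))
    simp [Rot] at g1 g2 g3 g4
    constructor <;> linarith
  · -- V = 0 → Rset = SO2
    intro h
    obtain ⟨h1, h2⟩ := hV0.1 h
    ext R
    rw [hchar]
    simp [h1, h2, SO2]
  · -- uniqueness
    intro hne
    have hab : ¬(a = 0 ∧ b = 0) := fun h => hne (hV0.2 h)
    set n : ℝ := Real.sqrt (a ^ 2 + b ^ 2) with hn
    have habpos : 0 < a ^ 2 + b ^ 2 := by
      rcases not_and_or.1 hab with h | h <;>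
        nlinarith [sq_nonneg a, sq_nonneg b, abs_pos.2 h, sq_abs a, sq_abs b]
    have hnpos : 0 < n := Real.sqrt_pos.2 habpos
    have hnne : n ≠ 0 := ne_of_gt hnpos
    have hn2 : n ^ 2 = a ^ 2 + b ^ 2 := Real.sq_sqrt (le_of_lt habpos)
    refine ⟨Rot (a / n) (b / n), ?_⟩
    have hmem : Rot (a / n) (b / n) ∈ SO2 := by
      apply Rot_mem_SO2
      field_simp
      linarith [hn2]
    ext R
    simp only [Set.mem_singleton_iff]
    constructor
    · intro hRmem
      obtain ⟨hR, hopt⟩ := (hchar R).1 hRmem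
      obtain ⟨hR1, hR2, hR3⟩ := (mem_SO2_iff R).1 hR
      have hge := hopt _ hmem
      have hQ00 : Rot (a / n) (b / n) 0 0 = a / n := by simp [Rot]
      have hQ10 : Rot (a / n) (b / n) 1 0 = b / n := by simp [Rot]
      rw [hQ00, hQ10] at hge
      have hgen : n ≤ R 0 0 * a + R 1 0 * b := by
        have h : a / n * a + b / n * b = n := by
          field_simp; nlinarith [hn2]
        linarith [hge, h.symm.le]
      have hz : (n * R 0 0 - a) ^ 2 + (n * R 1 0 - b) ^ 2 ≤ 0 := by
        have hexp : (n * R 0 0 - a) ^ 2 + (n * R 1 0 - b) ^ 2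
            = 2 * n ^ 2 - 2 * n * (R 0 0 * a + R 1 0 * b) := by
          linear_combination n ^ 2 * hR1 - hn2
        rw [hexp]
        nlinarith [hgen, hnpos]
      have h1 : n * R 0 0 = a := by
        nlinarith [sq_nonneg (n * R 0 0 - a), sq_nonneg (n * R 1 0 - b)]
      have h2 : n * R 1 0 = b := by
        nlinarith [sq_nonneg (n * R 0 0 - a), sq_nonneg (n * R 1 0 - b)]
      have hc : R 0 0 = a / n := by field_simp; linarith [h1]
      have hu : R 1 0 = b / n := by field_simp; linarith [h2]
      ext i j
      fin_cases i <;> fin_cases j <;> simp [Rot, hc, hu, hR2, hR3]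
    · rintro rfl
      rw [hchar]
      refine ⟨hmem, fun Q hQ => ?_⟩
      obtain ⟨hQ1, hQ2, hQ3⟩ := (mem_SO2_iff Q).1 hQ
      have hQ00 : Rot (a / n) (b / n) 0 0 = a / n := by simp [Rot]
      have hQ10 : Rot (a / n) (b / n) 1 0 = b / n := by simp [Rot]
      rw [hQ00, hQ10]
      have h : a / n * a + b / n * b = n := by field_simp; linarith [hn2]
      rw [h]
      nlinarith [sq_nonneg (a - n * Q 0 0), sq_nonneg (b - n * Q 1 0), hnpos, hn2, hQ1]
  · -- third part
    intro R hRmem i j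
    obtain ⟨hR, hopt⟩ := (hchar R).1 hRmem
    obtain ⟨hR1, hR2, hR3⟩ := (mem_SO2_iff R).1 hR
    have hf := hforce R hRmem
    fin_cases i <;> fin_cases j
    · show (∫ x in s, skw2 (R.transpose * G x) 0 0) = 0
      have h : (fun x => skw2 (R.transpose * G x) 0 0) = fun _ => (0 : ℝ) := by
        funext x
        simp [skw2, Matrix.mul_apply, Fin.sum_univ_two]
        ring
      rw [show (∫ x in s, skw2 (R.transpose * G x) 0 0) =
        ∫ x, skw2 (R.transpose * G x) 0 0 ∂μ from rfl, h]
      simp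
    · show (∫ x in s, skw2 (R.transpose * G x) 0 1) = 0
      have h : (fun x => skw2 (R.transpose * G x) 0 1) = fun x =>
          (R 1 0 / 2) * (G x 0 0 + G x 1 1) + (-(R 0 0) / 2) * (G x 1 0 - G x 0 1) := by
        funext x
        simp [skw2, Matrix.mul_apply, Matrix.transpose_apply, Matrix.sub_apply,
          Fin.sum_univ_two, hR2, hR3]
        ring
      rw [show (∫ x in s, skw2 (R.transpose * G x) 0 1) =
        ∫ x, skw2 (R.transpose * G x) 0 1 ∂μ from rfl, h, hlin]
      linarith [hf]
    · show (∫ x in s, skw2 (R.transpose * G x) 1 0) = 0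
      have h : (fun x => skw2 (R.transpose * G x) 1 0) = fun x =>
          (-(R 1 0) / 2) * (G x 0 0 + G x 1 1) + (R 0 0 / 2) * (G x 1 0 - G x 0 1) := by
        funext x
        simp [skw2, Matrix.mul_apply, Matrix.transpose_apply, Matrix.sub_apply,
          Fin.sum_univ_two, hR2, hR3]
        ring
      rw [show (∫ x in s, skw2 (R.transpose * G x) 1 0) =
        ∫ x, skw2 (R.transpose * G x) 1 0 ∂μ from rfl, h, hlin]
      linarith [hf]
    · show (∫ x in s, skw2 (R.transpose * G x) 1 1) = 0
      have h : (fun x => skw2 (R.transpose * G x) 1 1) = fun _ => (0 : ℝ) := by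
        funext x
        simp [skw2, Matrix.mul_apply, Fin.sum_univ_two]
        ring
      rw [show (∫ x in s, skw2 (R.transpose * G x) 1 1) =
        ∫ x, skw2 (R.transpose * G x) 1 1 ∂μ from rfl, h]
      simp
end
end

section
/- For every F ∈ ℝ^{2×2} and every rotation R ∈ SO(2), one has |√(FᵀF) − I| ≤ |F − R| in the Frobenius norm, where √(FᵀF) denotes the unique positive semidefinite symmetric square root of FᵀF. Consequently, |√(FᵀF) − I| ≤ dist(F, SO(2)). -/
open Matrix

noncomputable section

/-! `|S|² = tr(S²) = tr(FᵀF) = |F|²`, so `|S - I|² ≤ |F - R|²` reduces to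
`tr(RᵀF) ≤ tr S`. Writing `R` as a rotation by `θ`, `tr(RᵀF)` is the scalar product of
`(cos θ, sin θ)` with `(F₀₀ + F₁₁, F₁₀ - F₀₁)`, whose squared length is `|F|² + 2 det F`.
Since `det S = |det F| ≥ det F`, this is at most `|S|² + 2 det S = (tr S)²`. -/

lemma frob_nonneg (A : M2) : 0 ≤ frob A :=
  Real.sqrt_nonneg _

lemma frob_sq (A : M2) : frob A ^ 2 = (Aᵀ * A).trace := by
  rw [frob, Real.sq_sqrt (by positivity)]
  simp only [trace, diag, mul_apply, transpose_apply, Fin.sum_univ_two]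
  ring

lemma frob_sub_sq (A B : M2) :
    frob (A - B) ^ 2 = frob A ^ 2 - 2 * (Bᵀ * A).trace + frob B ^ 2 := by
  simp only [frob_sq, trace, diag, mul_apply, transpose_apply, Matrix.sub_apply, Fin.sum_univ_two]
  ring

lemma frob_one_sq : frob 1 ^ 2 = 2 := by
  simp [frob_sq]

lemma frob_sq_of_mem_SO2 {R : M2} (hR : R ∈ SO2) : frob R ^ 2 = 2 := by
  rw [frob_sq, hR.1]
  simp

lemma frob_sq_eq_of_mul_self_eq {F S : M2} (hS : Sᵀ = S) (hSF : S * S = Fᵀ * F) :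
    frob S ^ 2 = frob F ^ 2 := by
  rw [frob_sq, frob_sq, hS, hSF]

lemma SO2_apply_of_mem {R : M2} (hR : R ∈ SO2) :
    R 1 1 = R 0 0 ∧ R 0 1 = -R 1 0 ∧ R 0 0 ^ 2 + R 1 0 ^ 2 = 1 := by
  obtain ⟨hRR, hdet⟩ := hR
  have o00 := congrFun (congrFun hRR 0) 0
  have o01 := congrFun (congrFun hRR 0) 1
  have o11 := congrFun (congrFun hRR 1) 1
  simp only [mul_apply, transpose_apply, Fin.sum_univ_two, one_apply_eq] at o00 o11
  simp only [mul_apply, transpose_apply, Fin.sum_univ_two, one_apply_ne zero_ne_one] at o01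
  rw [det_fin_two] at hdet
  refine ⟨?_, ?_, by linear_combination o00⟩
  · linear_combination R 0 0 * o11 - R 0 1 * o01 - R 1 1 * hdet
  · linear_combination R 1 1 * o01 - R 0 1 * hdet - R 1 0 * o11

lemma trace_transpose_mul_sq_le {R : M2} (hR : R ∈ SO2) (F : M2) :
    (Rᵀ * F).trace ^ 2 ≤ frob F ^ 2 + 2 * F.det := by
  obtain ⟨h11, h01, hunit⟩ := SO2_apply_of_mem hR
  rw [frob_sq, det_fin_two]
  simp only [trace, diag, mul_apply, transpose_apply, Fin.sum_univ_two, h11, h01]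
  nlinarith [sq_nonneg (R 0 0 * (F 1 0 - F 0 1) - R 1 0 * (F 0 0 + F 1 1))]

lemma trace_sq_of_transpose_eq {S : M2} (hS : Sᵀ = S) :
    S.trace ^ 2 = frob S ^ 2 + 2 * S.det := by
  have h10 : S 1 0 = S 0 1 := by simpa using congrFun (congrFun hS 0) 1
  rw [frob_sq, det_fin_two]
  simp only [trace, diag, mul_apply, transpose_apply, Fin.sum_univ_two, h10]
  ring

lemma det_le_det_of_mul_self_eq {n : Type*} [Fintype n] [DecidableEq n] {F S : Matrix n n ℝ}
    (hS : S.PosSemidef) (hSF : S * S = Fᵀ * F) :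
    F.det ≤ S.det := by
  have hdet : S.det ^ 2 = F.det ^ 2 := by
    simpa [sq, det_mul, det_transpose] using congrArg det hSF
  exact le_of_abs_le (abs_le_of_sq_le_sq hdet.ge hS.det_nonneg)

lemma trace_transpose_mul_le_trace {R F S : M2} (hR : R ∈ SO2) (hS : S.PosSemidef)
    (hSF : S * S = Fᵀ * F) : (Rᵀ * F).trace ≤ S.trace := by
  have hSsym : Sᵀ = S := IsSymm.eq hS.1
  have hsq : (Rᵀ * F).trace ^ 2 ≤ S.trace ^ 2 := calc
    (Rᵀ * F).trace ^ 2 ≤ frob F ^ 2 + 2 * F.det := trace_transpose_mul_sq_le hR F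
    _ ≤ frob S ^ 2 + 2 * S.det := by
      rw [frob_sq_eq_of_mul_self_eq hSsym hSF]
      linarith [det_le_det_of_mul_self_eq hS hSF]
    _ = S.trace ^ 2 := (trace_sq_of_transpose_eq hSsym).symm
  exact le_of_abs_le (abs_le_of_sq_le_sq hsq hS.trace_nonneg)

/-- If `S` is the (unique) positive semidefinite symmetric square root of
`FᵀF`, then `|S − I| ≤ |F − R|` for every rotation `R ∈ SO(2)`, and consequently
`|S − I| ≤ dist(F, SO(2))` in the Frobenius norm. -/
theorem sqrt_strain_bound (F S : M2) (hSsym : S.transpose = S)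
    (hSpsd : ∀ v : Fin 2 → ℝ, 0 ≤ v ⬝ᵥ S.mulVec v)
    (hSsq : S * S = F.transpose * F) :
    (∀ R ∈ SO2, frob (S - 1) ≤ frob (F - R)) ∧ frob (S - 1) ≤ distSO2 F := by
  have hS : S.PosSemidef := posSemidef_iff_dotProduct_mulVec.mpr ⟨hSsym, hSpsd⟩
  have hbound : ∀ R ∈ SO2, frob (S - 1) ≤ frob (F - R) := by
    intro R hR
    rw [← pow_le_pow_iff_left₀ (frob_nonneg _) (frob_nonneg _) two_ne_zero,
      frob_sub_sq, frob_sub_sq, frob_one_sq, frob_sq_of_mem_SO2 hR,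
      frob_sq_eq_of_mul_self_eq hSsym hSsq, transpose_one, one_mul]
    linarith [trace_transpose_mul_le_trace hR hS hSsq]
  refine ⟨hbound, le_csInf ⟨_, 1, ⟨by simp, by simp⟩, rfl⟩ ?_⟩
  rintro _ ⟨R, hR, rfl⟩
  exact hbound R hR
end
end
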